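/- arXiv:2501.13330 — 2 statements merged into one kernel-verified Lean document; each statement's English description precedes it below -/
import Mathlib

section
/- For all integers m ≥ 1, C(m)·C(m+1) = Σ_{s=0}^{m} binom(2m, 2s)·C(m−s)·C(s), where C(n) = (2n)!/(n!(n+1)!) is the n-th Catalan number. -/
/-- The `n`-th Catalan number `C(n) = (2n)!/(n!(n+1)!)`, as a rational number. -/
noncomputable def catalanQ (n : ℕ) : ℚ :=
  ((2 * n).factorial : ℚ) / ((n.factorial : ℚ) * ((n + 1).factorial : ℚ))

namespace CatAux

lemma factQ_ne (n : ℕ) : ((n.factorial : ℚ)) ≠ 0 := by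
  exact_mod_cast n.factorial_ne_zero

lemma fs1 (n : ℕ) : (((n + 1).factorial : ℚ)) = ((n : ℚ) + 1) * (n.factorial : ℚ) := by
  push_cast [Nat.factorial_succ]; ring

lemma fs2 (n : ℕ) : (((n + 2).factorial : ℚ))
    = ((n : ℚ) + 2) * ((n : ℚ) + 1) * (n.factorial : ℚ) := by
  rw [show n + 2 = (n + 1) + 1 from rfl, fs1, fs1]; push_cast; ring

lemma fs3 (n : ℕ) : (((n + 3).factorial : ℚ))
    = ((n : ℚ) + 3) * ((n : ℚ) + 2) * ((n : ℚ) + 1) * (n.factorial : ℚ) := by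
  rw [show n + 3 = (n + 2) + 1 from rfl, fs1, fs2]; push_cast; ring

lemma fs4 (n : ℕ) : (((n + 4).factorial : ℚ))
    = ((n : ℚ) + 4) * ((n : ℚ) + 3) * ((n : ℚ) + 2) * ((n : ℚ) + 1) * (n.factorial : ℚ) := by
  rw [show n + 4 = (n + 3) + 1 from rfl, fs1, fs3]; push_cast; ring

lemma cat_succ (n : ℕ) :
    catalanQ (n + 1) = (2 * (2 * (n : ℚ) + 1) / ((n : ℚ) + 2)) * catalanQ n := by
  unfold catalanQ
  rw [show 2 * (n + 1) = 2 * n + 2 from by ring, fs2 (2 * n), fs1 n, fs2 n]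
  have h1 := factQ_ne (2 * n)
  have h2 := factQ_ne n
  have h3 : ((n : ℚ) + 1) ≠ 0 := by positivity
  have h4 : ((n : ℚ) + 2) ≠ 0 := by positivity
  field_simp
  push_cast
  ring

noncomputable def fQ (m s : ℕ) : ℚ :=
  ((2 * m).choose (2 * s) : ℚ) * catalanQ (m - s) * catalanQ s

noncomputable def G (m s : ℕ) : ℚ :=
  2 * s * (2 * m + 1) * (2 * (s : ℚ) ^ 2 - 3 * s * (m + 1) - (3 * m + 5))
    * ((2 * m).choose (2 * s) : ℚ) * catalanQ s
    * ((2 * (m - s)).factorial : ℚ)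
    / (((m - s + 1).factorial : ℚ) * ((m - s + 2).factorial : ℚ))

lemma G_zero (m : ℕ) : G m 0 = 0 := by simp [G]

set_option maxHeartbeats 2000000 in
lemma key (s k : ℕ) :
    ((s : ℚ) + k + 3) * ((s : ℚ) + k + 4) * fQ (s + k + 2) s
      - 4 * (2 * ((s : ℚ) + k) + 3) * (2 * ((s : ℚ) + k) + 5) * fQ (s + k + 1) s
    = G (s + k + 1) (s + 1) - G (s + k + 1) s := by
  unfold fQ G catalanQ
  rw [show s + k + 2 - s = k + 2 from by omega, show s + k + 1 - s = k + 1 from by omega,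
    show s + k + 1 - (s + 1) = k from by omega]
  rw [Nat.cast_choose ℚ (show 2 * s ≤ 2 * (s + k + 2) by omega),
    Nat.cast_choose ℚ (show 2 * s ≤ 2 * (s + k + 1) by omega),
    Nat.cast_choose ℚ (show 2 * (s + 1) ≤ 2 * (s + k + 1) by omega)]
  rw [show 2 * (s + k + 2) - 2 * s = 2 * k + 4 from by omega,
    show 2 * (s + k + 1) - 2 * s = 2 * k + 2 from by omega,
    show 2 * (s + k + 1) - 2 * (s + 1) = 2 * k from by omega,
    show 2 * (s + k + 2) = 2 * s + 2 * k + 4 from by omega,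
    show 2 * (s + k + 1) = 2 * s + 2 * k + 2 from by omega,
    show 2 * (s + 1) = 2 * s + 2 from by omega,
    show 2 * (k + 2) = 2 * k + 4 from by omega,
    show 2 * (k + 1) = 2 * k + 2 from by omega,
    show k + 1 + 1 = k + 2 from by omega,
    show k + 2 + 1 = k + 3 from by omega,
    show s + 1 + 1 = s + 2 from by omega,
    show k + 1 + 2 = k + 3 from by omega,
    show 2 * s + 2 * k + 4 = (2 * s + 2 * k) + 4 from by omega,
    show 2 * s + 2 * k + 2 = (2 * s + 2 * k) + 2 from by omega]
  rw [fs4 (2 * s + 2 * k), fs2 (2 * s + 2 * k), fs4 (2 * k), fs2 (2 * k),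
    fs2 (2 * s), fs1 s, fs2 s, fs1 k, fs2 k, fs3 k]
  have h1 := factQ_ne (2 * s + 2 * k)
  have h2 := factQ_ne (2 * s)
  have h3 := factQ_ne s
  have h4 := factQ_ne (2 * k)
  have h5 := factQ_ne k
  have hs1 : ((s : ℚ) + 1) ≠ 0 := by positivity
  have hs2 : ((s : ℚ) + 2) ≠ 0 := by positivity
  have hk1 : ((k : ℚ) + 1) ≠ 0 := by positivity
  have hk2 : ((k : ℚ) + 2) ≠ 0 := by positivity
  have hk3 : ((k : ℚ) + 3) ≠ 0 := by positivity
  have hk4 : ((k : ℚ) + 4) ≠ 0 := by positivity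
  have h2s1 : (2 * (s : ℚ) + 1) ≠ 0 := by positivity
  have h2s2 : (2 * (s : ℚ) + 2) ≠ 0 := by positivity
  have h2k1 : (2 * (k : ℚ) + 1) ≠ 0 := by positivity
  have h2k2 : (2 * (k : ℚ) + 2) ≠ 0 := by positivity
  have h2k3 : (2 * (k : ℚ) + 3) ≠ 0 := by positivity
  have h2k4 : (2 * (k : ℚ) + 4) ≠ 0 := by positivity
  have hsk : ((2 * s + 2 * k : ℕ) : ℚ) = 2 * s + 2 * k := by push_cast; ring
  rw [hsk]
  have hA1 : (2 * (s : ℚ) + 2 * k + 1) ≠ 0 := by positivity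
  have hA2 : (2 * (s : ℚ) + 2 * k + 2) ≠ 0 := by positivity
  have hA3 : (2 * (s : ℚ) + 2 * k + 3) ≠ 0 := by positivity
  have hA4 : (2 * (s : ℚ) + 2 * k + 4) ≠ 0 := by positivity
  push_cast
  field_simp
  ring

lemma boundary (m : ℕ) :
    ((m : ℚ) + 2) * ((m : ℚ) + 3) * (fQ (m + 1) m + fQ (m + 1) (m + 1))
      - 4 * (2 * (m : ℚ) + 1) * (2 * (m : ℚ) + 3) * fQ m m + G m m = 0 := by
  unfold fQ G catalanQ
  rw [show m + 1 - m = 1 from by omega, show m + 1 - (m + 1) = 0 from by omega,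
    show m - m = 0 from by omega]
  simp only [Nat.choose_self, Nat.cast_one]
  rw [Nat.cast_choose ℚ (show 2 * m ≤ 2 * (m + 1) by omega)]
  rw [show 2 * (m + 1) - 2 * m = 2 from by omega,
    show 2 * (m + 1) = 2 * m + 2 from by omega]
  rw [fs2 (2 * m), fs1 m, fs2 m]
  have h1 := factQ_ne (2 * m)
  have h2 := factQ_ne m
  have h3 : ((m : ℚ) + 1) ≠ 0 := by positivity
  have h4 : ((m : ℚ) + 2) ≠ 0 := by positivity
  norm_num [Nat.factorial]
  field_simp
  ring

lemma sumrec (m : ℕ) :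
    ((m : ℚ) + 2) * ((m : ℚ) + 3) * (∑ s ∈ Finset.range (m + 2), fQ (m + 1) s)
      = 4 * (2 * (m : ℚ) + 1) * (2 * (m : ℚ) + 3) * ∑ s ∈ Finset.range (m + 1), fQ m s := by
  have htel : ∑ s ∈ Finset.range m, (G m (s + 1) - G m s) = G m m - G m 0 :=
    Finset.sum_range_sub (G m) m
  have hpt : ∀ s ∈ Finset.range m,
      ((m : ℚ) + 2) * ((m : ℚ) + 3) * fQ (m + 1) s
        - 4 * (2 * (m : ℚ) + 1) * (2 * (m : ℚ) + 3) * fQ m s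
      = G m (s + 1) - G m s := by
    intro s hs
    rw [Finset.mem_range] at hs
    obtain ⟨k, hk⟩ : ∃ k, m = s + k + 1 := ⟨m - s - 1, by omega⟩
    subst hk
    have := key s k
    push_cast at this ⊢
    linarith [this]
  rw [Finset.sum_range_succ, Finset.sum_range_succ, Finset.sum_range_succ]
  have hsum : ∑ s ∈ Finset.range m,
      (((m : ℚ) + 2) * ((m : ℚ) + 3) * fQ (m + 1) s
        - 4 * (2 * (m : ℚ) + 1) * (2 * (m : ℚ) + 3) * fQ m s) = G m m - G m 0 := by
    rw [Finset.sum_congr rfl hpt]; exact htel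
  rw [Finset.sum_sub_distrib, ← Finset.mul_sum, ← Finset.mul_sum, G_zero] at hsum
  have hb := boundary m
  push_cast at hsum hb ⊢
  ring_nf at hsum hb ⊢
  linarith [hsum, hb]

end CatAux

theorem stmt_0 (m : ℕ) (hm : 1 ≤ m) :
    catalanQ m * catalanQ (m + 1) =
      ∑ s ∈ Finset.range (m + 1),
        ((2 * m).choose (2 * s) : ℚ) * catalanQ (m - s) * catalanQ s := by
  induction m, hm using Nat.le_induction with
  | base =>
    rw [Finset.sum_range_succ, Finset.sum_range_succ, Finset.sum_range_zero]
    norm_num [catalanQ, Nat.factorial]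
  | succ n hn ih =>
    have hrec := CatAux.sumrec n
    have hgoal : ∑ s ∈ Finset.range (n + 1 + 1),
        ((2 * (n + 1)).choose (2 * s) : ℚ) * catalanQ (n + 1 - s) * catalanQ s
        = ∑ s ∈ Finset.range (n + 2), CatAux.fQ (n + 1) s := by
      apply Finset.sum_congr rfl
      intro s _; rfl
    have hold : ∑ s ∈ Finset.range (n + 1), CatAux.fQ n s
        = catalanQ n * catalanQ (n + 1) := by
      rw [ih]
      exact Finset.sum_congr rfl fun s _ => rfl
    rw [hgoal]
    rw [hold] at hrec
    have e1 := CatAux.cat_succ n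
    have e2 := CatAux.cat_succ (n + 1)
    push_cast at e2
    have h1 : ((n : ℚ) + 2) ≠ 0 := by positivity
    have h2 : ((n : ℚ) + 3) ≠ 0 := by positivity
    rw [show (n : ℚ) + 1 + 2 = (n : ℚ) + 3 from by ring] at e2
    have e1' : ((n : ℚ) + 2) * catalanQ (n + 1) = 2 * (2 * (n : ℚ) + 1) * catalanQ n := by
      rw [e1]; field_simp
    have e2' : ((n : ℚ) + 3) * catalanQ (n + 1 + 1)
        = 2 * (2 * ((n : ℚ) + 1) + 1) * catalanQ (n + 1) := by
      rw [e2]; field_simp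
    have h0 : ((n : ℚ) + 2) * ((n : ℚ) + 3) ≠ 0 := by positivity
    apply mul_left_cancel₀ h0
    linear_combination (((n : ℚ) + 3) * catalanQ (n + 1 + 1)) * e1'
      + (2 * (2 * (n : ℚ) + 1) * catalanQ n) * e2' - hrec
end

section
/- In the representation ring of SL₂ over a field of characteristic zero, the m-th tensor power of the standard 2-dimensional representation ρ decomposes as ρ^{⊗m} ≅ ⊕_{r ≤ m, r ≡ m mod 2} n_m(r) · Sym^r ρ, where n_m(r) = binom(m, (m+r)/2) · 2(r+1)/(m+r+2). -/
/-! Both sides are polynomials in `t`; put `x = t / 2`. The characters `U_r(x)` of `Sym^r ρ`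
satisfy `2x · U_r = U_{r+1} + U_{r-1}` (Clebsch–Gordan for `ρ ⊗ Sym^r ρ`), so the
multiplicities of `ρ^{⊗m}` obey `n_{m+1}(r) = n_m(r+1) + n_m(r-1)`, with `n_0(r) = [r = 0]`.
This is Pascal's rule for the ballot numbers `binom(m, j) - binom(m, j+1)`, `j = (m + r)/2`,
and `binom(m, j+1) = binom(m, j) (m - j)/(j + 1)` turns these into
`binom(m, j) · 2(r+1)/(m+r+2)`. -/

open Finset

/-- The `n`-th Chebyshev polynomial of the second kind (over `ℂ`), via its explicit formula.
For `g ∈ SL₂` with trace `t`, the character of the irreducible representation `Sym^r ρ`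
(`ρ` the standard 2-dimensional representation) is `U_r(t/2)`. -/
noncomputable def chebyshevU (n : ℕ) (x : ℂ) : ℂ :=
  ∑ k ∈ Finset.range (n / 2 + 1), (-1 : ℂ) ^ k * ((n - k).choose k : ℂ) * (2 * x) ^ (n - 2 * k)

/-- The multiplicity `n_m(r) = binom(m, (m+r)/2) · 2(r+1)/(m+r+2)`. -/
noncomputable def multSL2 (m r : ℕ) : ℂ :=
  (m.choose ((m + r) / 2) : ℂ) * (2 * (r + 1)) / ((m : ℂ) + r + 2)

def chebyshevUTerm (n k : ℕ) (x : ℂ) : ℂ :=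
  (-1 : ℂ) ^ k * ((n - k).choose k : ℂ) * (2 * x) ^ (n - 2 * k)

lemma chebyshevU_eq_sum_range {n N : ℕ} (hN : n / 2 < N) (x : ℂ) :
    chebyshevU n x = ∑ k ∈ range N, chebyshevUTerm n k x := by
  refine Finset.sum_subset (range_subset_range.mpr (by omega)) fun k _ hk => ?_
  rw [mem_range, not_lt] at hk
  simp [Nat.choose_eq_zero_of_lt (show n - k < k by omega)]

lemma chebyshevUTerm_zero (n : ℕ) (x : ℂ) : chebyshevUTerm n 0 x = (2 * x) ^ n := by
  simp [chebyshevUTerm]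

-- Pascal's rule `C(n+1-k, k+1) = C(n-k, k) + C(n-k, k+1)`; when `n < 2k+1` the exponent
-- `n - 2k` truncates, but then the second binomial coefficient vanishes.
lemma chebyshevUTerm_succ_succ (n k : ℕ) (x : ℂ) :
    chebyshevUTerm (n + 2) (k + 1) x =
      2 * x * chebyshevUTerm (n + 1) (k + 1) x - chebyshevUTerm n k x := by
  rcases lt_or_ge n k with hnk | hkn
  · simp [chebyshevUTerm, Nat.sub_eq_zero_of_le (show n + 1 ≤ k by omega),
      Nat.sub_eq_zero_of_le hnk.le, Nat.choose_eq_zero_of_lt (show 0 < k by omega)]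
  simp only [chebyshevUTerm, show n + 2 - (k + 1) = n - k + 1 by omega,
    show n + 1 - (k + 1) = n - k by omega, show n + 2 - 2 * (k + 1) = n - 2 * k by omega,
    Nat.choose_succ_succ, Nat.cast_add]
  rcases lt_or_ge n (2 * k + 1) with h | h
  · rw [Nat.choose_eq_zero_of_lt (show n - k < k + 1 by omega)]
    ring
  · rw [show n - 2 * k = n + 1 - 2 * (k + 1) + 1 by omega, pow_succ]
    ring

lemma chebyshevU_zero (x : ℂ) : chebyshevU 0 x = 1 := by simp [chebyshevU]

lemma chebyshevU_one (x : ℂ) : chebyshevU 1 x = 2 * x := by simp [chebyshevU]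

lemma two_mul_mul_chebyshevU_succ (n : ℕ) (x : ℂ) :
    2 * x * chebyshevU (n + 1) x = chebyshevU (n + 2) x + chebyshevU n x := by
  rw [chebyshevU_eq_sum_range (N := n + 3) (by omega),
    chebyshevU_eq_sum_range (N := n + 3) (by omega),
    chebyshevU_eq_sum_range (N := n + 2) (by omega),
    sum_range_succ', sum_range_succ' _ (n + 2)]
  simp only [chebyshevUTerm_zero, chebyshevUTerm_succ_succ, sum_sub_distrib, mul_add, mul_sum]
  ring

-- Multiplication by `y` acts on the `U`-basis by a three-term recurrence, hence on coefficients
-- by its transpose.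
lemma mul_sum_range_eq_of_three_term {R : Type*} [CommRing R] {y : R} {U c c' : ℕ → R} {m : ℕ}
    (hU₀ : y * U 0 = U 1) (hU : ∀ n, y * U (n + 1) = U (n + 2) + U n)
    (hc'₀ : c' 0 = c 1) (hc' : ∀ r, c' (r + 1) = c (r + 2) + c r)
    (hc₁ : c (m + 1) = 0) (hc₂ : c (m + 2) = 0) :
    y * ∑ r ∈ range (m + 1), c r * U r = ∑ r ∈ range (m + 2), c' r * U r := by
  have hup : ∑ s ∈ range (m + 1), c (s + 1) * U s =
      c 1 * U 0 + ∑ s ∈ range (m + 1), c (s + 2) * U (s + 1) := by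
    rw [sum_range_succ', sum_range_succ _ m, hc₂]
    ring
  have hdown : c 0 * U 1 + ∑ s ∈ range (m + 1), c (s + 1) * U (s + 2) =
      ∑ s ∈ range (m + 1), c s * U (s + 1) := by
    rw [sum_range_succ' (fun s => c s * U (s + 1)), sum_range_succ _ m, hc₁]
    ring
  calc y * ∑ r ∈ range (m + 1), c r * U r
      = y * ∑ r ∈ range (m + 2), c r * U r := by
        rw [sum_range_succ _ (m + 1), hc₁, zero_mul, add_zero]
    _ = c 0 * U 1 + ∑ s ∈ range (m + 1), c (s + 1) * U (s + 2)
          + ∑ s ∈ range (m + 1), c (s + 1) * U s := by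
      simp only [sum_range_succ' _ (m + 1), mul_add, mul_sum, mul_left_comm y, hU, hU₀,
        sum_add_distrib]
      ring
    _ = ∑ r ∈ range (m + 2), c' r * U r := by
      rw [hdown, hup, sum_range_succ' (fun r => c' r * U r), hc'₀]
      simp only [hc', add_mul, sum_add_distrib]
      ring

def ballot (m j : ℕ) : ℤ := m.choose j - m.choose (j + 1)

lemma ballot_succ_succ (m j : ℕ) : ballot (m + 1) (j + 1) = ballot m j + ballot m (j + 1) := by
  simp only [ballot, Nat.choose_succ_succ]
  push_cast
  ring

lemma ballot_two_mul_add_one_self (i : ℕ) : ballot (2 * i + 1) i = 0 := by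
  rw [ballot, Nat.choose_symm_half, sub_self]

lemma ballot_mul_succ (m j : ℕ) :
    (ballot m j : ℂ) * (j + 1) = m.choose j * (2 * j + 1 - m) := by
  rcases le_or_gt j m with h | h
  · have := congrArg (Nat.cast : ℕ → ℂ) (Nat.choose_succ_right_eq m j)
    push_cast [ballot, Nat.cast_sub h] at this ⊢
    linear_combination -this
  · simp [ballot, Nat.choose_eq_zero_of_lt h, Nat.choose_eq_zero_of_lt (h.trans j.lt_succ_self)]

def symPowMult (m r : ℕ) : ℤ :=
  if r % 2 = m % 2 then ballot m ((m + r) / 2) else 0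

lemma symPowMult_eq_zero_of_lt {m r : ℕ} (h : m < r) : symPowMult m r = 0 := by
  unfold symPowMult
  split_ifs with hr
  · rw [ballot, Nat.choose_eq_zero_of_lt (show m < (m + r) / 2 by omega),
      Nat.choose_eq_zero_of_lt (show m < (m + r) / 2 + 1 by omega), sub_self]
  · rfl

lemma symPowMult_succ_zero (m : ℕ) : symPowMult (m + 1) 0 = symPowMult m 1 := by
  unfold symPowMult
  rcases Nat.even_or_odd' m with ⟨i, rfl | rfl⟩
  · simp [Nat.add_mod]
  · rw [if_pos (by omega), if_pos (by omega), show (2 * i + 1 + 1 + 0) / 2 = i + 1 by omega,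
      ballot_succ_succ, ballot_two_mul_add_one_self, zero_add]

lemma symPowMult_succ_succ (m r : ℕ) :
    symPowMult (m + 1) (r + 1) = symPowMult m (r + 2) + symPowMult m r := by
  unfold symPowMult
  by_cases h : r % 2 = m % 2
  · rw [if_pos (by omega), if_pos (by omega), if_pos h,
      show (m + 1 + (r + 1)) / 2 = (m + r) / 2 + 1 by omega,
      show (m + (r + 2)) / 2 = (m + r) / 2 + 1 by omega, ballot_succ_succ, add_comm]
  · rw [if_neg (by omega), if_neg (by omega), if_neg h, add_zero]

lemma two_mul_pow_eq_sum_symPowMult_mul_chebyshevU (m : ℕ) (x : ℂ) :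
    (2 * x) ^ m = ∑ r ∈ range (m + 1), (symPowMult m r : ℂ) * chebyshevU r x := by
  induction m with
  | zero => simp [symPowMult, ballot, chebyshevU_zero]
  | succ m ih =>
    rw [pow_succ', ih]
    refine mul_sum_range_eq_of_three_term (by rw [chebyshevU_zero, chebyshevU_one, mul_one])
      (two_mul_mul_chebyshevU_succ · x) (by simp [symPowMult_succ_zero])
      (by simp [symPowMult_succ_succ]) ?_ ?_ <;>
    simp [symPowMult_eq_zero_of_lt]

lemma multSL2_eq_ballot {m r : ℕ} (h : r % 2 = m % 2) :
    multSL2 m r = ballot m ((m + r) / 2) := by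
  set j := (m + r) / 2
  have hj : (m : ℂ) + r = 2 * j := by exact_mod_cast (show m + r = 2 * j by omega)
  have hb := ballot_mul_succ m j
  rw [multSL2, div_eq_iff (by norm_cast)]
  linear_combination (-2) * hb + (2 * (m.choose j : ℂ) - ballot m j) * hj

/-- The decomposition `ρ^{⊗m} ≅ ⊕_{r ≤ m, r ≡ m (2)} n_m(r) · Sym^r ρ` in the representation
ring of `SL₂` over a field of characteristic zero, expressed as the corresponding identity of
characters: since representations of `SL₂` in characteristic zero are determined by their
characters, for every `g ∈ SL₂(ℂ)` with trace `t` one has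
`t^m = Σ_{r ≤ m, r ≡ m (2)} n_m(r) · U_r(t/2)`, where `U_r(t/2)` is the character of
`Sym^r ρ` at `g`. -/
theorem stmt_8 (m : ℕ) (g : Matrix.SpecialLinearGroup (Fin 2) ℂ) :
    (Matrix.trace (g : Matrix (Fin 2) (Fin 2) ℂ)) ^ m =
      ∑ r ∈ Finset.range (m + 1),
        if r % 2 = m % 2 then
          multSL2 m r * chebyshevU r (Matrix.trace (g : Matrix (Fin 2) (Fin 2) ℂ) / 2)
        else 0 := by
  set t := Matrix.trace (g : Matrix (Fin 2) (Fin 2) ℂ)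
  conv_lhs => rw [← mul_div_cancel₀ t two_ne_zero, two_mul_pow_eq_sum_symPowMult_mul_chebyshevU]
  refine sum_congr rfl fun r _ => ?_
  unfold symPowMult
  split_ifs with h
  · rw [multSL2_eq_ballot h]
  · simp
end
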